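/- arXiv:1901.07321 — 4 statements merged into one kernel-verified Lean document; each statement's English description precedes it below -/
import Mathlib

section
/- Let E be a finite type, P sub-stochastic with spectral radius < 1, κ(x) = 1 − ∑_y P(x,y), and π a probability vector with πP = λπ, 0 < λ < 1. Then the killing time T and the killing location Y_T are independent under P_π: for all n ≥ 0 and y ∈ E, P_π(T = n+1, Y_T = y) = P_π(T = n+1) · P_π(Y_T = y). -/
open Matrix Finset
attribute [local instance] Matrix.linftyOpNormedRing Matrix.linftyOpNormedAlgebra

/-- **Discrete analogue of Theorem 2.1 (Martínez–San Martín).** Under a quasi-stationary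
distribution `π` (`πP = λπ`, `0 < λ < 1`), the killing time `T` and killing location
`Y_T` are independent: for all `n` and `y`,
`P_π(T = n+1, Y_T = y) = P_π(T = n+1) · P_π(Y_T = y)`, where
`P_π(T = n+1, Y_T = y) = (πPⁿ)(y) κ(y)`, `P_π(T = n+1) = ∑_z (πPⁿ)(z) κ(z)` and
`P_π(Y_T = y) = ∑_{m≥0} (πP^m)(y) κ(y)`. -/
theorem killing_time_location_independent
    {E : Type*} [Fintype E] [DecidableEq E] [Nonempty E]
    (P : Matrix E E ℝ)
    (hP_nonneg : ∀ x y, 0 ≤ P x y) (hP_sub : ∀ x, ∑ y, P x y ≤ 1)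
    (hP_spec : spectralRadius ℂ (P.map Complex.ofReal) < 1)
    (κ : E → ℝ) (hκ : ∀ x, κ x = 1 - ∑ y, P x y)
    (π : E → ℝ) (hπ_nonneg : ∀ x, 0 ≤ π x) (hπ_sum : ∑ x, π x = 1)
    (lam : ℝ) (hlam : 0 < lam ∧ lam < 1)
    (hQSD : ∀ y, ∑ x, π x * P x y = lam * π y) :
    ∀ (n : ℕ) (y : E),
      (∑ x, π x * (P ^ n) x y) * κ y
        = (∑ z, (∑ x, π x * (P ^ n) x z) * κ z)
          * (∑' m : ℕ, (∑ x, π x * (P ^ m) x y) * κ y) := by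
  obtain ⟨hl0, hl1⟩ := hlam
  -- key: π P^n = lam^n π
  have key : ∀ (n : ℕ) (y : E), ∑ x, π x * (P ^ n) x y = lam ^ n * π y := by
    intro n
    induction n with
    | zero => intro y; simp [Matrix.one_apply]
    | succ n ih =>
      intro y
      have : ∀ x, (P ^ (n + 1)) x y = ∑ z, (P ^ n) x z * P z y := by
        intro x
        rw [pow_succ, Matrix.mul_apply]
      simp_rw [this, Finset.mul_sum]
      rw [Finset.sum_comm]
      have : ∀ z, ∑ x, π x * ((P ^ n) x z * P z y)
          = (lam ^ n * π z) * P z y := by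
        intro z
        rw [← ih z, Finset.sum_mul]
        simp [mul_assoc]
      simp_rw [this]
      have : ∑ z, lam ^ n * π z * P z y = lam ^ n * ∑ z, π z * P z y := by
        rw [Finset.mul_sum]; exact Finset.sum_congr rfl fun z _ => by ring
      rw [this, hQSD y, pow_succ]; ring
  intro n y
  -- ∑ z, π z * κ z = 1 - lam
  have hsumκ : ∑ z, π z * κ z = 1 - lam := by
    have : ∑ z, π z * κ z = (∑ z, π z) - ∑ z, ∑ w, π z * P z w := by
      rw [← Finset.sum_sub_distrib]
      congr 1; ext z
      rw [hκ z, mul_sub, mul_one, Finset.mul_sum]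
    rw [this, hπ_sum, Finset.sum_comm]
    simp_rw [hQSD]
    rw [← Finset.mul_sum, hπ_sum]; ring
  simp_rw [key]
  have hgeo : ∑' m : ℕ, lam ^ m * π y * κ y = (1 - lam)⁻¹ * (π y * κ y) := by
    have : ∀ m : ℕ, lam ^ m * π y * κ y = lam ^ m * (π y * κ y) := fun m => by ring
    simp_rw [this]
    rw [tsum_mul_right, tsum_geometric_of_lt_one hl0.le hl1]
  rw [hgeo]
  have : ∑ z, lam ^ n * π z * κ z = lam ^ n * (1 - lam) := by
    rw [← hsumκ, Finset.mul_sum]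
    exact Finset.sum_congr rfl fun z _ => by ring
  rw [this]
  have hne : (1 - lam) ≠ 0 := by linarith
  rw [show lam ^ n * (1 - lam) * ((1 - lam)⁻¹ * (π y * κ y))
      = lam ^ n * ((1 - lam) * (1 - lam)⁻¹) * (π y * κ y) from by ring,
    mul_inv_cancel₀ hne]
  ring
end

section
/- Let E be a finite type, P sub-stochastic with spectral radius < 1, κ(x) = 1 − ∑_y P(x,y) with κ not identically zero on the support of the chain, μ a probability vector on E, and R = (I − P)⁻¹. Define the resurrected transition matrix Q(x,y) = P(x,y) + κ(x)μ(y). Then Q is stochastic (rows sum to 1), and the vector Π(x) = (μR)(x)/(μR·1) satisfies ΠQ = Π, i.e. Π is an invariant distribution of the resurrected chain. -/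
open Matrix Finset
attribute [local instance] Matrix.linftyOpNormedRing Matrix.linftyOpNormedAlgebra

/-!
Write `ν = μR`. From `R(I - P) = I` we get `νP = ν - μ`, and pairing `ν(I - P) = μ` with `𝟙`
gives `ν·κ = μ·𝟙 = 1`, since `κ = (I - P)𝟙`: every unit of mass started from `μ` is killed
exactly once. Hence `νQ = νP + (ν·κ)μ = ν - μ + μ = ν`, and `Π` is a scalar multiple of `ν`.
-/

theorem isUnit_one_sub_of_spectralRadius_lt_one {𝕜 A : Type*} [NormedField 𝕜] [Ring A]
    [Algebra 𝕜 A] {a : A} (h : spectralRadius 𝕜 a < 1) : IsUnit (1 - a) := by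
  have h1 : (1 : 𝕜) ∈ resolventSet 𝕜 a :=
    spectrum.mem_resolventSet_of_spectralRadius_lt (by simpa using h)
  simpa [spectrum.mem_resolventSet_iff, Algebra.algebraMap_eq_smul_one] using h1

namespace Matrix

variable {n : Type*} [Fintype n]

theorem isUnit_of_isUnit_map [DecidableEq n] {K L : Type*} [Field K] [CommRing L]
    [Nontrivial L] (f : K →+* L) {M : Matrix n n K} (h : IsUnit (M.map f)) : IsUnit M := by
  rw [isUnit_iff_isUnit_det] at h ⊢
  rw [← RingHom.mapMatrix_apply, ← RingHom.map_det] at h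
  refine isUnit_iff_ne_zero.mpr fun h0 => not_isUnit_zero (M₀ := L) ?_
  rwa [h0, map_zero] at h

theorem isUnit_one_sub_of_spectralRadius_map_ofReal_lt_one [DecidableEq n] {P : Matrix n n ℝ}
    (h : spectralRadius ℂ (P.map Complex.ofReal) < 1) : IsUnit (1 - P) :=
  isUnit_of_isUnit_map Complex.ofRealHom <| by
    simpa [Matrix.map_sub, Complex.ofRealHom] using isUnit_one_sub_of_spectralRadius_lt_one h

variable {R : Type*} [CommRing R]

/-- The chain `P` killed at rate `κ = 𝟙 - P𝟙` and reborn according to `μ`. -/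
def resurrected (P : Matrix n n R) (μ : n → R) : Matrix n n R :=
  P + vecMulVec (1 - P *ᵥ 1) μ

theorem resurrected_mulVec_one (P : Matrix n n R) {μ : n → R} (hμ : μ ⬝ᵥ 1 = 1) :
    resurrected P μ *ᵥ 1 = 1 := by
  rw [resurrected, add_mulVec, vecMulVec_mulVec, hμ]
  simp

theorem vecMul_resurrected_of_vecMul_one_sub [DecidableEq n] (P : Matrix n n R) {μ ν : n → R}
    (hν : ν ᵥ* (1 - P) = μ) (hμ : μ ⬝ᵥ 1 = 1) : ν ᵥ* resurrected P μ = ν := by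
  have hmass : ν ⬝ᵥ (1 - P *ᵥ 1) = 1 := by
    have hκ : (1 - P) *ᵥ (1 : n → R) = 1 - P *ᵥ 1 := by rw [sub_mulVec, one_mulVec]
    rw [← hκ, dotProduct_mulVec, hν, hμ]
  have hstep : ν ᵥ* P = ν - μ := by
    rw [← hν, vecMul_sub, vecMul_one, sub_sub_cancel]
  rw [resurrected, vecMul_add, vecMul_vecMulVec, hmass, one_smul, hstep, sub_add_cancel]

theorem vecMul_resurrected_vecMul_inv [DecidableEq n] {P : Matrix n n R}
    (hP : IsUnit (1 - P)) {μ : n → R} (hμ : μ ⬝ᵥ 1 = 1) :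
    (μ ᵥ* (1 - P)⁻¹) ᵥ* resurrected P μ = μ ᵥ* (1 - P)⁻¹ := by
  refine vecMul_resurrected_of_vecMul_one_sub P ?_ hμ
  rw [vecMul_vecMul, nonsing_inv_mul _ ((isUnit_iff_isUnit_det _).mp hP), vecMul_one]

end Matrix

theorem resurrected_invariant_distribution_general
    {E : Type*} [Fintype E] [DecidableEq E]
    (P : Matrix E E ℝ)
    (hP_spec : spectralRadius ℂ (P.map Complex.ofReal) < 1)
    (κ : E → ℝ) (hκ : ∀ x, κ x = 1 - ∑ y, P x y)
    (μ : E → ℝ) (hμ_sum : ∑ x, μ x = 1)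
    (R : Matrix E E ℝ) (hR : R = (1 - P)⁻¹)
    (Q : Matrix E E ℝ) (hQ : ∀ x y, Q x y = P x y + κ x * μ y)
    (Pi : E → ℝ)
    (hPi : ∀ x, Pi x = (∑ z, μ z * R z x) / (∑ w, ∑ z, μ z * R z w)) :
    (∀ x, ∑ y, Q x y = 1) ∧ (∀ y, ∑ x, Pi x * Q x y = Pi y) := by
  have hQ_eq : Q = resurrected P μ := by
    ext x y
    simp [resurrected, hQ, hκ, vecMulVec_apply, mulVec, dotProduct]
  have hμ : μ ⬝ᵥ 1 = 1 := by simpa [dotProduct] using hμ_sum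
  have hPi_eq : Pi = (∑ w, (μ ᵥ* R) w)⁻¹ • μ ᵥ* R := by
    ext x
    simp [hPi, vecMul, dotProduct, div_eq_inv_mul]
  have hunit : IsUnit (1 - P) := isUnit_one_sub_of_spectralRadius_map_ofReal_lt_one hP_spec
  refine ⟨fun x => ?_, fun y => ?_⟩
  · simpa [hQ_eq, mulVec, dotProduct] using congrFun (resurrected_mulVec_one P hμ) x
  · change (Pi ᵥ* Q) y = Pi y
    rw [hPi_eq, smul_vecMul, hQ_eq, hR, vecMul_resurrected_vecMul_inv hunit hμ]

/-- **Invariance of `Π(μ) ∝ μR` for the μ-resurrected chain.** With `P` sub-stochastic of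
spectral radius `< 1`, `κ x = 1 − ∑_y P x y` not identically zero, `R = (I − P)⁻¹`,
`Q x y = P x y + κ x * μ y`: `Q` is stochastic and `Pi x = (μR)(x)/(μR𝟙)` satisfies
`PiQ = Pi`. -/
theorem resurrected_invariant_distribution
    {E : Type*} [Fintype E] [DecidableEq E] [Nonempty E]
    (P : Matrix E E ℝ)
    (hP_nonneg : ∀ x y, 0 ≤ P x y) (hP_sub : ∀ x, ∑ y, P x y ≤ 1)
    (hP_spec : spectralRadius ℂ (P.map Complex.ofReal) < 1)
    (κ : E → ℝ) (hκ : ∀ x, κ x = 1 - ∑ y, P x y) (hκ_ne : ∃ x, κ x ≠ 0)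
    (μ : E → ℝ) (hμ_nonneg : ∀ x, 0 ≤ μ x) (hμ_sum : ∑ x, μ x = 1)
    (R : Matrix E E ℝ) (hR : R = (1 - P)⁻¹)
    (Q : Matrix E E ℝ) (hQ : ∀ x y, Q x y = P x y + κ x * μ y)
    (Pi : E → ℝ)
    (hPi : ∀ x, Pi x = (∑ z, μ z * R z x) / (∑ w, ∑ z, μ z * R z w)) :
    (∀ x, ∑ y, Q x y = 1) ∧ (∀ y, ∑ x, Pi x * Q x y = Pi y) :=
  resurrected_invariant_distribution_general P hP_spec κ hκ μ hμ_sum R hR Q hQ Pi hPi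
end

section
/- Let E be a finite type, P sub-stochastic with spectral radius < 1, κ(x) = 1 − ∑_y P(x,y), μ a probability vector, R = (I−P)⁻¹, and Π(y) = (μR)(y)/(μR·1). Then the exit-location distribution equals the κ-reweighting of Π: for every y, P_μ(killed at y) = κ(y)Π(y) / ∑_x κ(x)Π(x). -/
open Matrix Finset
attribute [local instance] Matrix.linftyOpNormedRing Matrix.linftyOpNormedAlgebra

/-!
Since the spectral radius of `P` is below `1`, the Neumann series `∑ Pⁿ` converges to
`R = (I - P)⁻¹`, so the expected occupation measure `∑ₙ μPⁿ` of the killed chain is `v = μR` and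
the chance of being killed at `y` is `v(y) κ(y)`. As `κ = (I - P)𝟙`, the total mass
`∑ₓ v(x) κ(x) = μ(I - P)⁻¹(I - P)𝟙 = ∑ μ = 1`, so normalising `κ Π = κ v / ∑ v` gives back `κ v`.
-/

open Filter in
theorem summable_norm_pow_of_spectralRadius_lt_one {A : Type*} [NormedRing A]
    [NormedAlgebra ℂ A] [CompleteSpace A] {a : A} (ha : spectralRadius ℂ a < 1) :
    Summable fun n : ℕ => ‖a ^ n‖ := by
  obtain ⟨r, hr0, hρr, hr1⟩ := ENNReal.lt_iff_exists_real_btwn.mp ha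
  have hroot : ∀ᶠ n : ℕ in atTop, ‖a ^ n‖ ^ (n⁻¹ : ℝ) < r := by
    have hgelfand := spectrum.pow_norm_pow_one_div_tendsto_nhds_spectralRadius a
    filter_upwards [hgelfand.eventually_lt_const hρr] with n hn
    rw [one_div] at hn
    exact (ENNReal.ofReal_lt_ofReal_iff_of_nonneg (by positivity)).1 hn
  refine (summable_geometric_of_lt_one hr0 (ENNReal.ofReal_lt_one.1 hr1))
    |>.of_norm_bounded_eventually_nat ?_
  filter_upwards [hroot, eventually_gt_atTop 0] with n hn hn0
  rw [norm_norm, ← Real.rpow_natCast]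
  exact ((Real.rpow_inv_lt_iff_of_pos (norm_nonneg _) hr0 (by positivity)).1 hn).le

theorem HasSum.vecMul {ι m n R : Type*} [Fintype m] [Semiring R] [TopologicalSpace R]
    [IsTopologicalSemiring R] {f : ι → Matrix m n R} {T : Matrix m n R} (h : HasSum f T)
    (v : m → R) : HasSum (fun i => v ᵥ* f i) (v ᵥ* T) :=
  Pi.hasSum.2 fun j => hasSum_sum fun x _ => (Pi.hasSum.1 (Pi.hasSum.1 h x) j).mul_left (v x)

namespace Matrix

variable {n R : Type*} [Fintype n] [DecidableEq n]

theorem summable_pow_of_spectralRadius_map_ofReal_lt_one {P : Matrix n n ℝ}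
    (hP : spectralRadius ℂ (P.map Complex.ofReal) < 1) : Summable (P ^ ·) := by
  have hC : Summable fun k : ℕ => (P ^ k).map Complex.ofReal := by
    rw [show (fun k : ℕ => (P ^ k).map Complex.ofReal) = (P.map Complex.ofReal ^ ·) from
      funext (map_pow Complex.ofRealHom.mapMatrix P)]
    exact (summable_norm_pow_of_spectralRadius_lt_one hP).of_norm
  exact Pi.summable.2 fun i => Pi.summable.2 fun j =>
    Complex.summable_ofReal.1 (Pi.summable.1 (Pi.summable.1 hC i) j)

theorem inv_one_sub_eq_tsum_pow [CommRing R] [TopologicalSpace R] [IsTopologicalRing R]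
    [T2Space R] {P : Matrix n n R} (hP : Summable (P ^ ·)) : (1 - P)⁻¹ = ∑' k, P ^ k :=
  inv_eq_right_inv hP.one_sub_mul_tsum_pow

theorem tsum_pow_apply_nonneg [Semiring R] [PartialOrder R] [IsOrderedRing R]
    [TopologicalSpace R] [OrderClosedTopology R] {P : Matrix n n R} (hP : Summable (P ^ ·))
    (h : ∀ i j, 0 ≤ P i j) (i j : n) : 0 ≤ (∑' k, P ^ k) i j :=
  (Pi.hasSum.1 (Pi.hasSum.1 hP.hasSum i) j).nonneg fun k => pow_apply_nonneg h k i j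

theorem tsum_vecMul_pow_apply [Semiring R] [TopologicalSpace R] [IsTopologicalSemiring R]
    [T2Space R] {P : Matrix n n R} (hP : Summable (P ^ ·)) (μ : n → R) (y : n) :
    ∑' k, (μ ᵥ* P ^ k) y = (μ ᵥ* ∑' k, P ^ k) y :=
  (Pi.hasSum.1 (hP.hasSum.vecMul μ) y).tsum_eq

theorem one_sub_mulVec_one_apply [Ring R] (P : Matrix n n R) (x : n) :
    ((1 - P) *ᵥ 1) x = 1 - ∑ y, P x y := by
  rw [sub_mulVec, one_mulVec]
  simp [mulVec, dotProduct]

theorem vecMul_dotProduct_mulVec_of_mul_eq_one [CommSemiring R] {M N : Matrix n n R}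
    (h : M * N = 1) (μ w : n → R) : (μ ᵥ* M) ⬝ᵥ (N *ᵥ w) = μ ⬝ᵥ w := by
  rw [dotProduct_mulVec, vecMul_vecMul, h, vecMul_one]

end Matrix

theorem mul_div_sum_mul_div_eq_of_dotProduct_eq_one {ι K : Type*} [Fintype ι] [Field K]
    {v κ : ι → K} (h : v ⬝ᵥ κ = 1) {S : K} (hS : S ≠ 0) (y : ι) :
    κ y * (v y / S) / ∑ x, κ x * (v x / S) = v y * κ y := by
  have hnorm : ∑ x, κ x * (v x / S) = 1 / S := by
    rw [← h, dotProduct_comm, dotProduct, sum_div]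
    simp_rw [mul_div_assoc]
  rw [hnorm]
  field_simp

theorem exit_location_via_resurrected_general
    {E : Type*} [Fintype E] [DecidableEq E]
    (P : Matrix E E ℝ)
    (hP_nonneg : ∀ x y, 0 ≤ P x y)
    (hP_spec : spectralRadius ℂ (P.map Complex.ofReal) < 1)
    (κ : E → ℝ) (hκ : ∀ x, κ x = 1 - ∑ y, P x y)
    (μ : E → ℝ) (hμ_nonneg : ∀ x, 0 ≤ μ x) (hμ_sum : ∑ x, μ x = 1)
    (R : Matrix E E ℝ) (hR : R = (1 - P)⁻¹)
    (Pi : E → ℝ)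
    (hPi : ∀ y, Pi y = (∑ z, μ z * R z y) / (∑ w, ∑ z, μ z * R z w)) :
    ∀ y, (∑' n : ℕ, (∑ x, μ x * (P ^ n) x y) * κ y)
      = κ y * Pi y / ∑ x, κ x * Pi x := by
  have hsum := P.summable_pow_of_spectralRadius_map_ofReal_lt_one hP_spec
  obtain rfl : R = ∑' k, P ^ k := hR.trans (inv_one_sub_eq_tsum_pow hsum)
  set v := μ ᵥ* ∑' k, P ^ k
  have hv_nonneg (y : E) : 0 ≤ v y := sum_nonneg fun z _ =>
    mul_nonneg (hμ_nonneg z) (tsum_pow_apply_nonneg hsum hP_nonneg z y)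
  have hκ_eq : κ = (1 - P) *ᵥ 1 := funext fun x => (hκ x).trans (one_sub_mulVec_one_apply P x).symm
  have hvκ : v ⬝ᵥ κ = 1 := by
    rw [hκ_eq, vecMul_dotProduct_mulVec_of_mul_eq_one
      (mul_eq_one_comm.1 hsum.one_sub_mul_tsum_pow), dotProduct_one, hμ_sum]
  have hS : 1 ≤ ∑ w, v w := calc
    1 = ∑ w, v w * κ w := hvκ.symm
    _ ≤ ∑ w, v w := sum_le_sum fun w _ => mul_le_of_le_one_right (hv_nonneg w)
      ((hκ w).trans_le (sub_le_self _ (sum_nonneg fun y _ => hP_nonneg w y)))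
  have hPi_eq : Pi = fun y => v y / ∑ w, v w := funext hPi
  intro y
  have hkilled : ∑' n : ℕ, ∑ x, μ x * (P ^ n) x y = v y := tsum_vecMul_pow_apply hsum μ y
  rw [tsum_mul_right, hkilled, hPi_eq]
  exact (mul_div_sum_mul_div_eq_of_dotProduct_eq_one hvκ (zero_lt_one.trans_le hS).ne' y).symm

/-- **Discrete Corollary 3.2.** The exit-location distribution of the killed chain
started from `μ` is the `κ`-reweighting of the invariant distribution
`Pi(y) = (μR)(y)/(μR𝟙)` of the `μ`-resurrected chain:
`P_μ(killed at y) = ∑_{n≥0} (μPⁿ)(y) κ(y) = κ(y) Pi(y) / ∑_x κ(x) Pi(x)`. -/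
theorem exit_location_via_resurrected
    {E : Type*} [Fintype E] [DecidableEq E] [Nonempty E]
    (P : Matrix E E ℝ)
    (hP_nonneg : ∀ x y, 0 ≤ P x y) (hP_sub : ∀ x, ∑ y, P x y ≤ 1)
    (hP_spec : spectralRadius ℂ (P.map Complex.ofReal) < 1)
    (κ : E → ℝ) (hκ : ∀ x, κ x = 1 - ∑ y, P x y)
    (μ : E → ℝ) (hμ_nonneg : ∀ x, 0 ≤ μ x) (hμ_sum : ∑ x, μ x = 1)
    (R : Matrix E E ℝ) (hR : R = (1 - P)⁻¹)
    (Pi : E → ℝ)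
    (hPi : ∀ y, Pi y = (∑ z, μ z * R z y) / (∑ w, ∑ z, μ z * R z w)) :
    ∀ y, (∑' n : ℕ, (∑ x, μ x * (P ^ n) x y) * κ y)
      = κ y * Pi y / ∑ x, κ x * Pi x :=
  exit_location_via_resurrected_general P hP_nonneg hP_spec κ hκ μ hμ_nonneg hμ_sum R hR Pi hPi
end

section
/- Let E be a finite type, P sub-stochastic with spectral radius < 1, κ(x) = 1 − ∑_y P(x,y), μ a probability vector, and Q(x,y) = P(x,y) + κ(x)μ(y) the resurrected stochastic matrix. If ν is any probability vector with νQ = ν, then ν is proportional to μ(I−P)⁻¹, i.e. ν(y) = (μR)(y)/(μR𝟙) for all y, where R = (I−P)⁻¹. -/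
open Matrix Finset
attribute [local instance] Matrix.linftyOpNormedRing Matrix.linftyOpNormedAlgebra

/-!
Invariance `νQ = ν` of `Q = P + κ μᵀ` says `ν(I − P) = (ν·κ) μ`. As `1` lies outside the
spectrum of `P`, `I − P` is invertible, so `ν = (ν·κ) μR`, and `∑ ν = 1` fixes the constant.
-/

namespace Matrix

variable {E K : Type*} [Fintype E] [DecidableEq E]

theorem isUnit_det_one_sub_of_spectralRadius_lt_one {P : Matrix E E ℝ}
    (hP : spectralRadius ℂ (P.map Complex.ofReal) < 1) : IsUnit (1 - P).det := by
  have hres : (1 : ℂ) ∈ resolventSet ℂ (P.map Complex.ofReal) :=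
    spectrum.mem_resolventSet_of_spectralRadius_lt (by simpa using hP)
  have hunit : IsUnit ((1 - P).map Complex.ofReal) := by
    rw [Matrix.map_sub _ Complex.ofReal_sub,
      Matrix.map_one _ Complex.ofReal_zero Complex.ofReal_one]
    simpa [spectrum.mem_resolventSet_iff] using hres
  have hdet : ((1 - P).map Complex.ofReal).det = ((1 - P).det : ℂ) :=
    (RingHom.map_det Complex.ofRealHom _).symm
  rw [isUnit_iff_isUnit_det, hdet, isUnit_iff_ne_zero, Complex.ofReal_ne_zero] at hunit
  exact hunit.isUnit

theorem vecMul_one_sub_eq_of_vecMul_add_vecMulVec [CommRing K] {P : Matrix E E K}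
    {κ μ ν : E → K} (h : ν ᵥ* (P + vecMulVec κ μ) = ν) :
    ν ᵥ* (1 - P) = (ν ⬝ᵥ κ) • μ := by
  rw [vecMul_add, vecMul_vecMulVec] at h
  rw [vecMul_sub, vecMul_one]
  nth_rewrite 1 [← h]
  abel

theorem eq_smul_vecMul_inv_of_vecMul_eq_smul [CommRing K] {A : Matrix E E K} {μ ν : E → K}
    {c : K} (h : ν ᵥ* A = c • μ) (hA : IsUnit A.det) : ν = c • (μ ᵥ* A⁻¹) := by
  rw [← smul_vecMul, ← h, vecMul_vecMul, mul_nonsing_inv _ hA, vecMul_one]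

end Matrix

theorem apply_eq_div_sum_of_eq_smul {E K : Type*} [Fintype E] [Field K] {ν w : E → K} {c : K}
    (hν : ν = c • w) (hsum : ∑ x, ν x = 1) (y : E) : ν y = w y / ∑ x, w x := by
  have hcw : c * ∑ x, w x = 1 := by simpa [hν, Finset.mul_sum] using hsum
  rw [eq_div_iff (right_ne_zero_of_mul_eq_one hcw), hν, Pi.smul_apply, smul_eq_mul]
  linear_combination w y * hcw

theorem resurrected_invariant_unique_general
    {E : Type*} [Fintype E] [DecidableEq E]
    (P : Matrix E E ℝ)
    (hP_spec : spectralRadius ℂ (P.map Complex.ofReal) < 1)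
    (κ : E → ℝ)
    (μ : E → ℝ)
    (R : Matrix E E ℝ) (hR : R = (1 - P)⁻¹)
    (Q : Matrix E E ℝ) (hQ : ∀ x y, Q x y = P x y + κ x * μ y)
    (ν : E → ℝ) (hν_sum : ∑ x, ν x = 1)
    (hν_inv : ∀ y, ∑ x, ν x * Q x y = ν y) :
    ∀ y, ν y = (∑ z, μ z * R z y) / (∑ w, ∑ z, μ z * R z w) := by
  have hQ_eq : Q = P + vecMulVec κ μ := by
    ext x y
    rw [hQ, Matrix.add_apply, vecMulVec_apply]
  have hν_Q : ν ᵥ* Q = ν := funext hν_inv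
  rw [hQ_eq] at hν_Q
  have hν_R : ν = (ν ⬝ᵥ κ) • (μ ᵥ* R) := hR ▸ eq_smul_vecMul_inv_of_vecMul_eq_smul
    (vecMul_one_sub_eq_of_vecMul_add_vecMulVec hν_Q)
    (isUnit_det_one_sub_of_spectralRadius_lt_one hP_spec)
  exact apply_eq_div_sum_of_eq_smul hν_R hν_sum

/-- **Uniqueness of the invariant distribution of the μ-resurrected chain.** If `ν` is a
probability vector with `νQ = ν` for `Q x y = P x y + κ x * μ y`, then
`ν(y) = (μR)(y)/(μR𝟙)` for all `y`, where `R = (I−P)⁻¹`. -/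
theorem resurrected_invariant_unique
    {E : Type*} [Fintype E] [DecidableEq E] [Nonempty E]
    (P : Matrix E E ℝ)
    (hP_nonneg : ∀ x y, 0 ≤ P x y) (hP_sub : ∀ x, ∑ y, P x y ≤ 1)
    (hP_spec : spectralRadius ℂ (P.map Complex.ofReal) < 1)
    (κ : E → ℝ) (hκ : ∀ x, κ x = 1 - ∑ y, P x y)
    (μ : E → ℝ) (hμ_nonneg : ∀ x, 0 ≤ μ x) (hμ_sum : ∑ x, μ x = 1)
    (R : Matrix E E ℝ) (hR : R = (1 - P)⁻¹)
    (Q : Matrix E E ℝ) (hQ : ∀ x y, Q x y = P x y + κ x * μ y)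
    (ν : E → ℝ) (hν_nonneg : ∀ x, 0 ≤ ν x) (hν_sum : ∑ x, ν x = 1)
    (hν_inv : ∀ y, ∑ x, ν x * Q x y = ν y) :
    ∀ y, ν y = (∑ z, μ z * R z y) / (∑ w, ∑ z, μ z * R z w) :=
  resurrected_invariant_unique_general P hP_spec κ μ R hR Q hQ ν hν_sum hν_inv
end
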